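/- arXiv:1706.09675 — 3 statements merged into one kernel-verified Lean document; each statement's English description precedes it below -/
import Mathlib

section
/- Let H be a simple hypergraph on vertex set {x_1,…,x_n} (no edge contains another), let I = I(H) be its edge ideal in R = k[x_1,…,x_n], let F be a good leaf of H, and let f = ∏_{x ∈ F} x be the monomial associated with F. Then I^{t+1} : f = I^t for all t ≥ 1. -/
open MvPolynomial

/-- The depth of the `R`-module `M` with respect to the ideal `J`: the supremum of
lengths of `M`-regular sequences consisting of elements of `J`. -/
noncomputable def idealDepth {R : Type*} [CommRing R] (J : Ideal R)
    (M : Type*) [AddCommGroup M] [Module R M] : ℕ :=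
  sSup {d : ℕ | ∃ rs : List R, rs.length = d ∧ (∀ r ∈ rs, r ∈ J) ∧
    RingTheory.Sequence.IsRegular M rs}

/-- The irrelevant maximal homogeneous ideal `(x₁, …, xₙ)` of the polynomial ring. -/
noncomputable def mxIdeal (k : Type*) [Field k] (n : ℕ) : Ideal (MvPolynomial (Fin n) k) :=
  Ideal.span (Set.range MvPolynomial.X)

/-- `depth R/I`, the depth of the quotient module with respect to the maximal
homogeneous ideal. -/
noncomputable def pdepth {k : Type*} [Field k] {n : ℕ}
    (I : Ideal (MvPolynomial (Fin n) k)) : ℕ :=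
  idealDepth (mxIdeal k n) (MvPolynomial (Fin n) k ⧸ I)

/-- `p` is homogeneous of degree `d ∈ ℤ` (where `0` is homogeneous of any degree). -/
def HomogOfDeg {k : Type*} [Field k] {n : ℕ} (p : MvPolynomial (Fin n) k) (d : ℤ) : Prop :=
  p = 0 ∨ ∃ m : ℕ, (m : ℤ) = d ∧ p.IsHomogeneous m

/-- A finite graded free resolution of `R/I`: free modules `Fᵢ = ⊕_j R(-D i j)` (of rank
`b i`, zero for `i > len`), differentials given by matrices `A i : Fᵢ₊₁ → Fᵢ` whose entries
are homogeneous of the appropriate degrees, and an augmentation `F₀ → R/I` given by the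
homogeneous column `v`, the whole complex being exact. -/
structure GradedFreeRes {k : Type*} [Field k] {n : ℕ}
    (I : Ideal (MvPolynomial (Fin n) k)) where
  len : ℕ
  b : ℕ → ℕ
  hb : ∀ i : ℕ, len < i → b i = 0
  D : (i : ℕ) → Fin (b i) → ℤ
  A : (i : ℕ) → Matrix (Fin (b i)) (Fin (b (i+1))) (MvPolynomial (Fin n) k)
  v : Fin (b 0) → MvPolynomial (Fin n) k
  hv : ∀ r, HomogOfDeg (v r) (D 0 r)
  hA : ∀ (i : ℕ) r c, HomogOfDeg (A i r c) (D (i+1) c - D i r)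
  haug : Function.Surjective
    (fun w : Fin (b 0) → MvPolynomial (Fin n) k => Ideal.Quotient.mk I (∑ r, w r * v r))
  hex0 : Function.Exact ((A 0).mulVec)
    (fun w : Fin (b 0) → MvPolynomial (Fin n) k => Ideal.Quotient.mk I (∑ r, w r * v r))
  hex : ∀ i : ℕ, Function.Exact ((A (i+1)).mulVec) ((A i).mulVec)

/-- The Castelnuovo–Mumford regularity `reg R/I`: the least `r` such that some finite
graded free resolution of `R/I` has all its `i`-th twists `≤ r + i`; equivalently (via the
minimal free resolution) `reg R/I = max { j - i : β_{i,j}(R/I) ≠ 0 }`. -/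
noncomputable def regQuot {k : Type*} [Field k] {n : ℕ}
    (I : Ideal (MvPolynomial (Fin n) k)) : ℤ :=
  sInf {r : ℤ | ∃ F : GradedFreeRes I, ∀ (i : ℕ) (j : Fin (F.b i)), F.D i j - (i : ℤ) ≤ r}

/-- The regularity of a (nonzero) homogeneous ideal: `reg I = reg R/I + 1`. -/
noncomputable def regIdeal {k : Type*} [Field k] {n : ℕ}
    (I : Ideal (MvPolynomial (Fin n) k)) : ℤ :=
  regQuot I + 1

/-- An ideal is homogeneous if it is generated by homogeneous polynomials. -/
def IsHomogeneousIdeal {k : Type*} [Field k] {n : ℕ}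
    (I : Ideal (MvPolynomial (Fin n) k)) : Prop :=
  ∃ T : Set (MvPolynomial (Fin n) k), (∀ p ∈ T, ∃ d : ℕ, p.IsHomogeneous d) ∧ I = Ideal.span T

/-- A monomial ideal: an ideal generated by monomials. -/
def IsMonomialIdeal {k : Type*} [Field k] {n : ℕ}
    (I : Ideal (MvPolynomial (Fin n) k)) : Prop :=
  ∃ T : Set (Fin n →₀ ℕ), I = Ideal.span ((fun m => monomial m (1 : k)) '' T)


/-- The edge ideal `I(H)` of the hypergraph on vertices `x_1, …, x_n` with edge set `E`. -/
noncomputable def edgeIdealH (k : Type*) [Field k] {n : ℕ} (E : Set (Finset (Fin n))) :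
    Ideal (MvPolynomial (Fin n) k) :=
  Ideal.span ((fun F => ∏ i ∈ F, MvPolynomial.X i) '' E)

/-- `F` is a good leaf of the hypergraph with edge set `E`: `F` is an edge and the
intersections of `F` with the other edges form a chain with respect to containment. -/
def IsGoodLeaf {n : ℕ} (E : Set (Finset (Fin n))) (F : Finset (Fin n)) : Prop :=
  F ∈ E ∧ ∀ G₁ ∈ E, ∀ G₂ ∈ E, G₁ ≠ F → G₂ ≠ F → (G₁ ∩ F ⊆ G₂ ∩ F ∨ G₂ ∩ F ⊆ G₁ ∩ F)


namespace GoodLeafAux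

variable {k : Type*} [Field k] {n : ℕ}

/-- The exponent vector of the squarefree monomial with support `G`. -/
noncomputable def degF {n : ℕ} (G : Finset (Fin n)) : Fin n →₀ ℕ :=
  ∑ i ∈ G, Finsupp.single i 1

lemma degF_apply (G : Finset (Fin n)) (x : Fin n) :
    degF G x = if x ∈ G then 1 else 0 := by
  classical
  rw [degF, Finsupp.finset_sum_apply]
  simp [Finsupp.single_apply]

lemma prod_X_eq (G : Finset (Fin n)) :
    (∏ i ∈ G, (X i : MvPolynomial (Fin n) k)) = monomial (degF G) 1 := by
  classical
  induction G using Finset.induction with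
  | empty => simp [degF]
  | @insert a s h ih =>
    have hd : degF (insert a s) = Finsupp.single a 1 + degF s := by
      unfold degF; rw [Finset.sum_insert h]
    rw [Finset.prod_insert h, ih, hd,
      show (X a : MvPolynomial (Fin n) k) = monomial (Finsupp.single a 1) 1 from rfl,
      monomial_mul, one_mul]

/-- Exponent vectors of products of `m` edge monomials. -/
def Mset {n : ℕ} (E : Set (Finset (Fin n))) (m : ℕ) : Set (Fin n →₀ ℕ) :=
  {s | ∃ l : Multiset (Finset (Fin n)),
    (∀ G ∈ l, G ∈ E) ∧ Multiset.card l = m ∧ s = (l.map degF).sum}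

lemma pow_eq (E : Set (Finset (Fin n))) (m : ℕ) :
    (edgeIdealH k E) ^ m
      = Ideal.span ((fun s => monomial s (1 : k)) '' Mset E m) := by
  classical
  induction m with
  | zero =>
    have h0 : Mset (n := n) E 0 = {0} := by
      ext s
      constructor
      · rintro ⟨l, -, hc, rfl⟩
        rw [Multiset.card_eq_zero] at hc
        simp [hc]
      · rintro rfl
        exact ⟨0, by simp, by simp, by simp⟩
    rw [h0]
    simp [Ideal.span_singleton_one, monomial_zero']
  | succ m ih =>
    rw [pow_succ, ih, edgeIdealH, Ideal.span_mul_span']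
    congr 1
    ext p
    rw [Set.mem_mul]
    constructor
    · rintro ⟨q, ⟨a, ⟨l, hl1, hl2, rfl⟩, rfl⟩, r, ⟨G, hG, rfl⟩, rfl⟩
      refine ⟨(l.map degF).sum + degF G, ⟨G ::ₘ l, ?_, by simp [hl2], by simp [add_comm]⟩, ?_⟩
      · intro G' h
        rcases Multiset.mem_cons.mp h with rfl | h
        exacts [hG, hl1 _ h]
      · simp only [prod_X_eq, monomial_mul, mul_one]
    · rintro ⟨s, ⟨l, hl1, hl2, rfl⟩, rfl⟩
      have hne : l ≠ 0 := by
        intro h; rw [h] at hl2; simp at hl2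
      obtain ⟨G, hG⟩ := Multiset.exists_mem_of_ne_zero hne
      refine ⟨monomial ((l.erase G).map degF).sum 1,
        ⟨_, ⟨l.erase G, fun G' h => hl1 _ (Multiset.mem_of_mem_erase h),
          by simp [Multiset.card_erase_of_mem hG, hl2], rfl⟩, rfl⟩,
        _, ⟨G, hl1 _ hG, rfl⟩, ?_⟩
      simp only [prod_X_eq, monomial_mul, mul_one]
      congr 1
      conv_rhs => rw [← Multiset.cons_erase hG]
      simp [add_comm]

lemma exists_max {E : Set (Finset (Fin n))} {F : Finset (Fin n)}
    (hF : IsGoodLeaf E F) :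
    ∀ l : Multiset (Finset (Fin n)), l ≠ 0 → (∀ G ∈ l, G ∈ E) →
      ∃ G₁ ∈ l, ∀ G ∈ l, G ∩ F ⊆ G₁ ∩ F := by
  classical
  have comp : ∀ G ∈ E, ∀ G' ∈ E, G ∩ F ⊆ G' ∩ F ∨ G' ∩ F ⊆ G ∩ F := by
    intro G hG G' hG'
    by_cases h1 : G = F
    · subst h1
      right
      exact subset_trans Finset.inter_subset_right (by simp)
    by_cases h2 : G' = F
    · subst h2
      left
      exact subset_trans Finset.inter_subset_right (by simp)
    exact hF.2 G hG G' hG' h1 h2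
  intro l
  induction l using Multiset.induction with
  | empty => intro h; exact absurd rfl h
  | cons G l ih =>
    intro _ hmem
    by_cases hl : l = 0
    · subst hl
      refine ⟨G, Multiset.mem_cons_self _ _, ?_⟩
      intro G' h
      rw [Multiset.mem_cons] at h
      rcases h with rfl | h
      · exact subset_rfl
      · simp at h
    · obtain ⟨G₁, hG₁, hmax⟩ := ih hl fun G' h => hmem _ (Multiset.mem_cons_of_mem h)
      rcases comp G (hmem _ (Multiset.mem_cons_self _ _)) G₁
          (hmem _ (Multiset.mem_cons_of_mem hG₁)) with h | h
      · refine ⟨G₁, Multiset.mem_cons_of_mem hG₁, ?_⟩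
        intro G' h'
        rcases Multiset.mem_cons.mp h' with rfl | h'
        exacts [h, hmax _ h']
      · refine ⟨G, Multiset.mem_cons_self _ _, ?_⟩
        intro G' h'
        rcases Multiset.mem_cons.mp h' with rfl | h'
        exacts [subset_rfl, (hmax _ h').trans h]

end GoodLeafAux

/-- **Lemma (good leaf colon).** Let `I` be the edge ideal of a simple hypergraph (no edge
contains another) with a good leaf `F`, and let `f` be the monomial associated with `F`.
Then `I^(t+1) : f = I^t` for all `t ≥ 1`. -/

theorem pow_colon_good_leaf {k : Type*} [Field k] {n : ℕ}
    (E : Set (Finset (Fin n)))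
    (hsimple : ∀ F₁ ∈ E, ∀ F₂ ∈ E, F₁ ⊆ F₂ → F₁ = F₂)
    (F : Finset (Fin n)) (hF : IsGoodLeaf E F)
    (I : Ideal (MvPolynomial (Fin n) k)) (hI : I = edgeIdealH k E)
    (f : MvPolynomial (Fin n) k) (hf : f = ∏ i ∈ F, MvPolynomial.X i) :
    ∀ t : ℕ, 1 ≤ t → (I ^ (t + 1)).colon (Ideal.span {f}) = I ^ t := by
  classical
  intro t _
  apply le_antisymm
  · -- hard direction
    intro g hg
    have hgf : g * f ∈ I ^ (t + 1) := Ideal.mem_colon_span_singleton.mp hg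
    rw [hI, GoodLeafAux.pow_eq, mem_ideal_span_monomial_image] at hgf
    rw [hI, GoodLeafAux.pow_eq, mem_ideal_span_monomial_image]
    intro u hu
    have hmem : u + GoodLeafAux.degF F ∈ (g * f).support := by
      rw [MvPolynomial.mem_support_iff, hf, GoodLeafAux.prod_X_eq,
        MvPolynomial.coeff_mul_monomial, mul_one]
      exact MvPolynomial.mem_support_iff.mp hu
    obtain ⟨s, ⟨l, hl1, hl2, rfl⟩, hle⟩ := hgf _ hmem
    have hne : l ≠ 0 := by
      intro h; rw [h] at hl2; simp at hl2
    obtain ⟨G₁, hG₁, hmax⟩ := GoodLeafAux.exists_max hF l hne hl1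
    refine ⟨((l.erase G₁).map GoodLeafAux.degF).sum,
      ⟨l.erase G₁, fun G' h => hl1 _ (Multiset.mem_of_mem_erase h),
        by simp [Multiset.card_erase_of_mem hG₁, hl2], rfl⟩, ?_⟩
    -- pointwise inequality
    have hsplit : (l.map GoodLeafAux.degF).sum
        = GoodLeafAux.degF G₁ + ((l.erase G₁).map GoodLeafAux.degF).sum := by
      conv_lhs => rw [← Multiset.cons_erase hG₁]
      simp
    rw [Finsupp.le_def] at hle ⊢
    intro x
    have happ : ∀ m : Multiset (Finset (Fin n)),
        ((m.map GoodLeafAux.degF).sum : Fin n →₀ ℕ) x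
          = (m.map fun G => GoodLeafAux.degF G x).sum := by
      intro m
      induction m using Multiset.induction with
      | empty => simp
      | cons a m ih => simp [ih]
    have hx := hle x
    rw [hsplit, Finsupp.add_apply] at hx
    rw [Finsupp.add_apply] at hx
    by_cases hxF : x ∈ F
    · by_cases hxG : x ∈ G₁
      · have h1 : GoodLeafAux.degF G₁ x = 1 := by rw [GoodLeafAux.degF_apply]; simp [hxG]
        have h2 : GoodLeafAux.degF F x = 1 := by rw [GoodLeafAux.degF_apply]; simp [hxF]
        omega
      · -- all edges in l avoid x
        have hz : ((l.erase G₁).map GoodLeafAux.degF).sum x = 0 := by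
          rw [happ]
          apply Multiset.sum_eq_zero
          intro a ha
          obtain ⟨G, hGmem, rfl⟩ := Multiset.mem_map.mp ha
          have hGl : G ∈ l := Multiset.mem_of_mem_erase hGmem
          have : x ∉ G := by
            intro hxG'
            exact hxG (Finset.mem_of_mem_inter_left
              (hmax G hGl (Finset.mem_inter.mpr ⟨hxG', hxF⟩)))
          rw [GoodLeafAux.degF_apply]
          simp [this]
        omega
    · have h2 : GoodLeafAux.degF F x = 0 := by rw [GoodLeafAux.degF_apply]; simp [hxF]
      omega
  · -- easy direction
    intro g hg
    rw [Ideal.mem_colon_span_singleton]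
    have hfI : f ∈ I := by
      rw [hI, hf, edgeIdealH]
      exact Ideal.subset_span ⟨F, hF.1, rfl⟩
    rw [pow_succ]
    exact Ideal.mul_mem_mul hg hfI
end

section
/- Let H be a simple hypergraph on vertex set {x_1,…,x_n} (no edge contains another), let I = I(H) be its edge ideal in R = k[x_1,…,x_n], let F be a good leaf of H, and let f = ∏_{x ∈ F} x be the monomial associated with F. Then the integral closures of powers satisfy \overline{I^{t+1}} : f = \overline{I^t} for all t ≥ 1. -/
open MvPolynomial

/-- The integral closure `\overline{J}` of an ideal `J`: generated by (in fact equal to the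
set of) all `r` satisfying an equation of integral dependence
`r^m + a₁ r^(m-1) + ⋯ + a_m = 0` with `aᵢ ∈ J^i`. -/
noncomputable def intClos {R : Type*} [CommRing R] (J : Ideal R) : Ideal R :=
  Ideal.span {r : R | ∃ m : ℕ, 0 < m ∧ ∃ a : ℕ → R,
    (∀ i : ℕ, 1 ≤ i → i ≤ m → a i ∈ J ^ i) ∧
    r ^ m + ∑ i ∈ Finset.Icc 1 m, a i * r ^ (m - i) = 0}

/-! The inclusion `\overline{I^t} ⊆ \overline{I^(t+1)} : f` holds because `f ∈ I`. Conversely,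
ordering monomials lexicographically, it suffices to show that the leading term `c x^b` of any
`g` with `f g ∈ \overline{I^(t+1)}` lies in `\overline{I^t}`. An equation of integral dependence
gives a power `x^δ` of `f` with `x^δ (f g)^N ∈ I^((t+1)N)` for every `N`, so the leading monomial
`x^δ f^N x^(N b)` is divisible by a product of `(t+1)N` edges. Because `F` is a good leaf, among
these edges the one meeting `F` most contains every other intersection with `F`, so it absorbs a
copy of `f`; removing `N` edges this way, `x^δ x^(N b)` is divisible by `tN` edges. Dickson's lemma
applied to these multisets of edges together with their slack exponents yields `M > 0` with
`x^(M b) ∈ I^(tM)`, so `x^b` is integral over `I^t`. -/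

section IntegralClosure

variable {R : Type*} [CommRing R]

theorem mem_intClos_of_pow_mem_pow {J : Ideal R} {u : R} {M : ℕ} (hM : 0 < M)
    (hu : u ^ M ∈ J ^ M) : u ∈ intClos J := by
  refine Ideal.subset_span ⟨M, hM, fun i => if i = M then -u ^ M else 0, fun i _ _ => ?_, ?_⟩
  · dsimp only
    split_ifs with hi
    · exact hi ▸ (J ^ M).neg_mem hu
    · exact Submodule.zero_mem _
  · rw [Finset.sum_eq_single_of_mem M (Finset.mem_Icc.2 ⟨hM, le_rfl⟩)
      (fun i _ hi => by simp [hi])]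
    simp

theorem mul_mem_intClos_mul {J J' : Ideal R} {c r : R} (hc : c ∈ J') (hr : r ∈ intClos J) :
    c * r ∈ intClos (J' * J) := by
  suffices intClos J ≤ Submodule.comap (LinearMap.mulLeft R c) (intClos (J' * J)) from this hr
  refine Ideal.span_le.2 fun r ⟨m, hm, a, ha, heq⟩ => Ideal.subset_span ?_
  refine ⟨m, hm, fun i => c ^ i * a i, fun i h1 h2 => ?_, ?_⟩
  · rw [mul_pow]
    exact Ideal.mul_mem_mul (Ideal.pow_mem_pow hc i) (ha i h1 h2)
  · have hterm : ∀ i ∈ Finset.Icc 1 m, c ^ i * a i * (c * r) ^ (m - i) =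
        c ^ m * (a i * r ^ (m - i)) := fun i hi => by
      rw [mul_pow, ← pow_sub_mul_pow c (Finset.mem_Icc.1 hi).2]
      ring
    simp only [LinearMap.mulLeft_apply]
    rw [Finset.sum_congr rfl hterm, mul_pow, ← Finset.mul_sum, ← mul_add, heq, mul_zero]

theorem pow_mul_pow_mem_pow_of_integral {J : Ideal R} {c r : R} (hc : c ∈ J) {m : ℕ}
    {a : ℕ → R} (ha : ∀ i : ℕ, 1 ≤ i → i ≤ m → a i ∈ J ^ i)
    (heq : r ^ m + ∑ i ∈ Finset.Icc 1 m, a i * r ^ (m - i) = 0) (N : ℕ) :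
    c ^ (m - 1) * r ^ N ∈ J ^ N := by
  induction N using Nat.strong_induction_on with
  | _ N ih =>
  rcases lt_or_ge N m with hN | hN
  · rw [← pow_sub_mul_pow c (Nat.le_sub_one_of_lt hN), mul_right_comm]
    exact Ideal.mul_mem_left _ _ (Ideal.pow_mem_pow hc N)
  · have hexpand : c ^ (m - 1) * r ^ N =
        -∑ i ∈ Finset.Icc 1 m, a i * (c ^ (m - 1) * r ^ (N - i)) := by
      have hr : ∀ i ∈ Finset.Icc 1 m, a i * (c ^ (m - 1) * r ^ (N - i)) =
          c ^ (m - 1) * r ^ (N - m) * (a i * r ^ (m - i)) := fun i hi => by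
        rw [show N - i = N - m + (m - i) by have := (Finset.mem_Icc.1 hi).2; omega, pow_add]
        ring
      rw [Finset.sum_congr rfl hr, ← Finset.mul_sum, eq_neg_of_add_eq_zero_right heq,
        ← pow_sub_mul_pow r hN]
      ring
    rw [hexpand]
    refine (Ideal.neg_mem_iff _).2 (Ideal.sum_mem _ fun i hi => ?_)
    obtain ⟨hi1, him⟩ := Finset.mem_Icc.1 hi
    rw [show J ^ N = J ^ i * J ^ (N - i) by rw [← pow_add, Nat.add_sub_cancel' (him.trans hN)]]
    exact Ideal.mul_mem_mul (ha i hi1 him) (ih (N - i) (by omega))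

theorem exists_pow_mul_pow_mem_pow_of_mem_intClos {J : Ideal R} {c p : R} (hc : c ∈ J)
    (hp : p ∈ intClos J) : ∃ e : ℕ, ∀ N : ℕ, c ^ e * p ^ N ∈ J ^ N := by
  induction hp using Submodule.span_induction with
  | mem r hr =>
    obtain ⟨m, -, a, ha, heq⟩ := hr
    exact ⟨m - 1, pow_mul_pow_mem_pow_of_integral hc ha heq⟩
  | zero =>
    refine ⟨0, fun N => ?_⟩
    rcases N with _ | N <;> simp
  | add x y _ _ hx hy =>
    obtain ⟨ex, hx⟩ := hx
    obtain ⟨ey, hy⟩ := hy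
    refine ⟨ex + ey, fun N => ?_⟩
    rw [add_pow, Finset.mul_sum]
    refine Ideal.sum_mem _ fun i hi => ?_
    have hiN : i + (N - i) = N := Nat.add_sub_cancel' (Nat.lt_succ_iff.1 (Finset.mem_range.1 hi))
    have hterm : c ^ (ex + ey) * (x ^ i * y ^ (N - i) * N.choose i) =
        N.choose i * ((c ^ ex * x ^ i) * (c ^ ey * y ^ (N - i))) := by ring
    rw [hterm, show J ^ N = J ^ i * J ^ (N - i) by rw [← pow_add, hiN]]
    exact Ideal.mul_mem_left _ _ (Ideal.mul_mem_mul (hx i) (hy (N - i)))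
  | smul a x _ hx =>
    obtain ⟨e, hx⟩ := hx
    refine ⟨e, fun N => ?_⟩
    rw [smul_eq_mul, mul_pow, mul_left_comm]
    exact Ideal.mul_mem_left _ _ (hx N)

end IntegralClosure

section MonomialIdeal

variable {σ R ι : Type*} [CommSemiring R] (e : ι → σ →₀ ℕ) (E : Set ι)

theorem span_monomial_image_pow (N : ℕ) :
    Ideal.span ((fun i => monomial (e i) (1 : R)) '' E) ^ N =
      Ideal.span ((fun d => monomial d (1 : R)) ''
        {d | ∃ s : Multiset ι, Multiset.card s = N ∧ (∀ i ∈ s, i ∈ E) ∧ (s.map e).sum = d}) := by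
  induction N with
  | zero =>
    simp [monomial_zero']
  | succ N ih =>
    rw [pow_succ, ih, Ideal.span_mul_span']
    congr 1
    ext p
    simp only [Set.mem_mul, Set.mem_image, Set.mem_ofPred_eq]
    constructor
    · rintro ⟨_, ⟨_, ⟨s, hcard, hs, rfl⟩, rfl⟩, _, ⟨i, hi, rfl⟩, rfl⟩
      refine ⟨((i ::ₘ s).map e).sum, ⟨i ::ₘ s, by simp [hcard], ?_, rfl⟩, ?_⟩
      · exact fun j hj => (Multiset.mem_cons.1 hj).elim (· ▸ hi) (hs j)
      · simp [monomial_mul, add_comm]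
    · rintro ⟨_, ⟨s, hcard, hs, rfl⟩, rfl⟩
      obtain ⟨i, s, rfl, hs_card⟩ := Multiset.card_eq_succ_iff.1 hcard
      refine ⟨_, ⟨(s.map e).sum, ⟨s, hs_card, fun j hj => hs j (Multiset.mem_cons_of_mem hj), rfl⟩,
        rfl⟩, _, ⟨i, hs i (Multiset.mem_cons_self i s), rfl⟩, ?_⟩
      simp [monomial_mul, add_comm]

theorem mem_span_monomial_image_pow_iff {p : MvPolynomial σ R} {N : ℕ} :
    p ∈ Ideal.span ((fun i => monomial (e i) (1 : R)) '' E) ^ N ↔ ∀ a ∈ p.support,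
      ∃ s : Multiset ι, Multiset.card s = N ∧ (∀ i ∈ s, i ∈ E) ∧ (s.map e).sum ≤ a := by
  rw [span_monomial_image_pow, mem_ideal_span_monomial_image]
  simp [and_assoc]

variable {e E}

theorem MonomialOrder.exists_multiset_le_of_monomial_mul_pow_mem [NoZeroDivisors R]
    [Nontrivial R] (m : MonomialOrder σ) {p : MvPolynomial σ R} (hp : p ≠ 0) {a : σ →₀ ℕ}
    {N K : ℕ} (h : monomial a 1 * p ^ N ∈ Ideal.span ((fun i => monomial (e i) (1 : R)) '' E) ^ K) :
    ∃ s : Multiset ι, Multiset.card s = K ∧ (∀ i ∈ s, i ∈ E) ∧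
      (s.map e).sum ≤ a + N • m.degree p := by
  have hmon : (monomial a (1 : R)) ≠ 0 := by simp
  have hne : monomial a 1 * p ^ N ≠ 0 := mul_ne_zero hmon (pow_ne_zero N hp)
  have hdeg : m.degree (monomial a 1 * p ^ N) = a + N • m.degree p := by
    classical
    rw [m.degree_mul hmon (pow_ne_zero N hp), m.degree_pow, m.degree_monomial, if_neg one_ne_zero]
  rw [← hdeg]
  exact (mem_span_monomial_image_pow_iff e E).1 h _ (m.degree_mem_support hne)

end MonomialIdeal

theorem MonomialOrder.le_of_leadingTerm_mem {σ R : Type*} [CommRing R] (m : MonomialOrder σ)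
    {A B : Ideal (MvPolynomial σ R)} (hBA : B ≤ A)
    (h : ∀ g ∈ A, g ≠ 0 → m.leadingTerm g ∈ B) : A ≤ B := by
  intro g hg
  induction hd : m.toSyn (m.degree g) using WellFoundedLT.induction generalizing g with
  | _ d ih =>
  by_cases hg0 : g = 0
  · exact hg0 ▸ B.zero_mem
  have hlt := h g hg hg0
  by_cases hdeg : m.degree g = 0
  · rwa [m.eq_C_of_degree_eq_zero hdeg, ← monomial_zero', ← hdeg]
  rw [← sub_add_cancel g (m.leadingTerm g)]
  exact B.add_mem (ih _ (hd ▸ m.degree_sub_leadingTerm_lt_degree hdeg) (A.sub_mem hg (hBA hlt))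
    rfl) hlt

theorem exists_le_multiset_sum_le_nsmul {ι σ : Type*} [Finite ι] [Finite σ]
    (e : ι → σ →₀ ℕ) {t : ℕ} {δ b : σ →₀ ℕ} (s : ℕ → Multiset ι)
    (hcard : ∀ N, Multiset.card (s N) = t * N) (hsum : ∀ N, ((s N).map e).sum ≤ δ + N • b) :
    ∃ M, 0 < M ∧ ∃ N, ∃ s' ≤ s N, Multiset.card s' = t * M ∧ (s'.map e).sum ≤ M • b := by
  classical
  have : WellQuasiOrderedLE (Multiset ι) :=
    Finsupp.orderIsoMultiset.wellQuasiOrderedLE_iff.1 inferInstance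
  set A := fun N => ((s N).map e).sum
  obtain ⟨N, N', hNN', hs, hslack⟩ :=
    wellQuasiOrdered_le (fun N => (s N, δ + N • b - A N))
  refine ⟨N' - N, by omega, N', s N' - s N, Multiset.sub_le_self _ _, ?_, ?_⟩
  · rw [Multiset.card_sub hs, hcard, hcard, Nat.mul_sub]
  · have hA : ((s N' - s N).map e).sum + A N = A N' := by
      rw [← Multiset.sum_add, ← Multiset.map_add, tsub_add_cancel_of_le hs]
    have hN := add_tsub_cancel_of_le (hsum N)
    have hN' := add_tsub_cancel_of_le (hsum N')
    refine le_of_add_le_add_right (a := A N + (δ + N • b - A N)) ?_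
    calc ((s N' - s N).map e).sum + (A N + (δ + N • b - A N))
        ≤ ((s N' - s N).map e).sum + A N + (δ + N' • b - A N') := by
          rw [← add_assoc]; exact add_le_add_right hslack _
      _ = (N' - N) • b + (A N + (δ + N • b - A N)) := by
          rw [hA, hN', hN, ← add_assoc, add_comm _ δ, add_assoc, ← add_nsmul,
            Nat.sub_add_cancel hNN'.le]

noncomputable def edgeExponent {σ : Type*} (G : Finset σ) : σ →₀ ℕ :=
  ∑ i ∈ G, Finsupp.single i 1

theorem edgeExponent_apply {σ : Type*} [DecidableEq σ] (G : Finset σ) (x : σ) :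
    edgeExponent G x = if x ∈ G then 1 else 0 := by
  simp [edgeExponent, Finsupp.finsetSum_apply, Finsupp.single_apply]

theorem prod_X_eq_monomial_edgeExponent {σ R : Type*} [CommSemiring R] (G : Finset σ) :
    ∏ i ∈ G, (X i : MvPolynomial σ R) = monomial (edgeExponent G) 1 :=
  (monomial_sum_one G _).symm

theorem edgeIdealH_eq_span_monomial (k : Type*) [Field k] {n : ℕ} (E : Set (Finset (Fin n))) :
    edgeIdealH k E = Ideal.span ((fun G => monomial (edgeExponent G) (1 : k)) '' E) := by
  simp only [edgeIdealH, prod_X_eq_monomial_edgeExponent]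

theorem multiset_sum_edgeExponent_le_of_inter_subset {σ : Type*} [DecidableEq σ]
    {s : Multiset (Finset σ)} {F G₀ : Finset σ} {u : σ →₀ ℕ}
    (hs : ∀ G ∈ s, G ∩ F ⊆ G₀ ∩ F)
    (h : edgeExponent G₀ + (s.map edgeExponent).sum ≤ u + edgeExponent F) :
    (s.map edgeExponent).sum ≤ u := by
  intro x
  have hx := h x
  simp only [Finsupp.add_apply, edgeExponent_apply] at hx
  by_cases hxF : x ∈ F
  · by_cases hxG₀ : x ∈ G₀
    · simp only [hxF, hxG₀, if_true] at hx
      omega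
    · suffices (s.map edgeExponent).sum x = 0 by omega
      refine Finsupp.notMem_support_iff.1 fun hmem => hxG₀ ?_
      obtain ⟨_, hG, hxG⟩ := Finsupp.mem_support_multiset_sum x hmem
      obtain ⟨G, hGs, rfl⟩ := Multiset.mem_map.1 hG
      have : x ∈ G := by simpa [edgeExponent_apply] using hxG
      exact (Finset.mem_inter.1 (hs G hGs (Finset.mem_inter.2 ⟨this, hxF⟩))).1
  · simp only [hxF, if_false] at hx
    omega

namespace IsGoodLeaf

variable {n : ℕ} {E : Set (Finset (Fin n))} {F : Finset (Fin n)}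

theorem inter_subset_or (hF : IsGoodLeaf E F) {G₁ G₂ : Finset (Fin n)} (hG₁ : G₁ ∈ E)
    (hG₂ : G₂ ∈ E) : G₁ ∩ F ⊆ G₂ ∩ F ∨ G₂ ∩ F ⊆ G₁ ∩ F := by
  by_cases h₁ : G₁ = F
  · subst h₁
    exact Or.inr (by simp)
  by_cases h₂ : G₂ = F
  · subst h₂
    exact Or.inl (by simp)
  exact hF.2 G₁ hG₁ G₂ hG₂ h₁ h₂

theorem exists_inter_subset (hF : IsGoodLeaf E F) {s : Multiset (Finset (Fin n))}
    (hs : ∀ G ∈ s, G ∈ E) (hs0 : s ≠ 0) : ∃ G₀ ∈ s, ∀ G ∈ s, G ∩ F ⊆ G₀ ∩ F := by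
  obtain ⟨G₀, hG₀, hmax⟩ := s.toFinset.exists_max_image (fun G => (G ∩ F).card)
    (Multiset.toFinset_nonempty.2 hs0)
  rw [Multiset.mem_toFinset] at hG₀
  refine ⟨G₀, hG₀, fun G hG => ?_⟩
  rcases hF.inter_subset_or (hs G hG) (hs G₀ hG₀) with h | h
  · exact h
  · exact (Finset.eq_of_subset_of_card_le h (hmax G (Multiset.mem_toFinset.2 hG))).ge

theorem exists_le_multiset_sum_le (hF : IsGoodLeaf E F) (N : ℕ) {u : Fin n →₀ ℕ}
    {s : Multiset (Finset (Fin n))} (hs : ∀ G ∈ s, G ∈ E) (hN : N ≤ Multiset.card s)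
    (hsum : (s.map edgeExponent).sum ≤ u + N • edgeExponent F) :
    ∃ s' ≤ s, Multiset.card s' = Multiset.card s - N ∧ (s'.map edgeExponent).sum ≤ u := by
  induction N generalizing s with
  | zero => exact ⟨s, le_rfl, rfl, by simpa using hsum⟩
  | succ N ih =>
    have hs0 : s ≠ 0 := by rintro rfl; simp at hN
    obtain ⟨G₀, hG₀, hmax⟩ := hF.exists_inter_subset hs hs0
    obtain ⟨s, rfl⟩ := Multiset.exists_cons_of_mem hG₀
    rw [Multiset.map_cons, Multiset.sum_cons, succ_nsmul, ← add_assoc] at hsum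
    have hsum' := multiset_sum_edgeExponent_le_of_inter_subset
      (fun G hG => hmax G (Multiset.mem_cons_of_mem hG)) hsum
    obtain ⟨s', hs's, hcard, hs'sum⟩ := ih (fun G hG => hs G (Multiset.mem_cons_of_mem hG))
      (by simpa using hN) hsum'
    refine ⟨s', hs's.trans (Multiset.le_cons_self s G₀), ?_, hs'sum⟩
    simp [hcard]

end IsGoodLeaf

theorem monomial_edgeExponent_mem_edgeIdealH (k : Type*) [Field k] {n : ℕ}
    {E : Set (Finset (Fin n))} {G : Finset (Fin n)} (hG : G ∈ E) :
    monomial (edgeExponent G) (1 : k) ∈ edgeIdealH k E :=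
  prod_X_eq_monomial_edgeExponent (R := k) G ▸ Ideal.subset_span ⟨G, hG, rfl⟩

theorem IsGoodLeaf.exists_multiset_le_of_monomial_mul_pow_mem {k : Type*} [Field k] {n : ℕ}
    {E : Set (Finset (Fin n))} {F : Finset (Fin n)} (hF : IsGoodLeaf E F)
    (m : MonomialOrder (Fin n)) {g : MvPolynomial (Fin n) k} (hg0 : g ≠ 0) {δ : Fin n →₀ ℕ}
    {t N : ℕ} (h : monomial δ 1 * (monomial (edgeExponent F) 1 * g) ^ N ∈
      (edgeIdealH k E ^ (t + 1)) ^ N) :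
    ∃ s : Multiset (Finset (Fin n)), Multiset.card s = t * N ∧ (∀ G ∈ s, G ∈ E) ∧
      (s.map edgeExponent).sum ≤ δ + N • m.degree g := by
  rw [mul_pow, monomial_pow, one_pow, ← mul_assoc, monomial_mul, one_mul, ← pow_mul,
    edgeIdealH_eq_span_monomial] at h
  obtain ⟨s, hcard, hs, hsum⟩ := m.exists_multiset_le_of_monomial_mul_pow_mem hg0 h
  rw [add_right_comm] at hsum
  obtain ⟨s', hs's, hcard', hsum'⟩ := hF.exists_le_multiset_sum_le N hs
    (by rw [hcard]; exact Nat.le_mul_of_pos_left N t.succ_pos) hsum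
  refine ⟨s', ?_, fun G hG => hs G (Multiset.subset_of_le hs's hG), hsum'⟩
  rw [hcard', hcard, add_mul, one_mul, Nat.add_sub_cancel]

theorem IsGoodLeaf.leadingTerm_mem_intClos_pow {k : Type*} [Field k] {n : ℕ}
    {E : Set (Finset (Fin n))} {F : Finset (Fin n)} (hF : IsGoodLeaf E F)
    (m : MonomialOrder (Fin n)) (t : ℕ) {g : MvPolynomial (Fin n) k} (hg0 : g ≠ 0)
    (hg : monomial (edgeExponent F) 1 * g ∈ intClos (edgeIdealH k E ^ (t + 1))) :
    m.leadingTerm g ∈ intClos (edgeIdealH k E ^ t) := by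
  have hfI := Ideal.pow_mem_pow (monomial_edgeExponent_mem_edgeIdealH k hF.1) (t + 1)
  obtain ⟨e, he⟩ := exists_pow_mul_pow_mem_pow_of_mem_intClos hfI hg
  simp only [monomial_pow, one_pow] at he
  choose s hcard hs hsum using fun N =>
    hF.exists_multiset_le_of_monomial_mul_pow_mem m hg0 (he N)
  obtain ⟨M, hM, N, s', hs', hcard', hsum'⟩ :=
    exists_le_multiset_sum_le_nsmul edgeExponent s hcard hsum
  have hpow : monomial (m.degree g) (1 : k) ^ M ∈ (edgeIdealH k E ^ t) ^ M := by
    rw [monomial_pow, one_pow, ← pow_mul, edgeIdealH_eq_span_monomial,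
      mem_span_monomial_image_pow_iff]
    intro a ha
    rw [Finset.mem_singleton.1 (support_monomial_subset ha)]
    exact ⟨s', hcard', fun G hG => hs N G (Multiset.subset_of_le hs' hG), hsum'⟩
  rw [MonomialOrder.leadingTerm, ← mul_one (m.leadingCoeff g), ← C_mul_monomial]
  exact Ideal.mul_mem_left _ _ (mem_intClos_of_pow_mem_pow hM hpow)

theorem intClos_pow_colon_good_leaf_general {k : Type*} [Field k] {n : ℕ}
    (E : Set (Finset (Fin n)))
    (F : Finset (Fin n)) (hF : IsGoodLeaf E F)
    (I : Ideal (MvPolynomial (Fin n) k)) (hI : I = edgeIdealH k E)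
    (f : MvPolynomial (Fin n) k) (hf : f = ∏ i ∈ F, MvPolynomial.X i) :
    ∀ t : ℕ, 1 ≤ t → (intClos (I ^ (t + 1))).colon (Ideal.span {f}) = intClos (I ^ t) := by
  intro t _
  subst hI hf
  rw [prod_X_eq_monomial_edgeExponent]
  have hle : intClos (edgeIdealH k E ^ t) ≤
      (intClos (edgeIdealH k E ^ (t + 1))).colon (Ideal.span {monomial (edgeExponent F) (1 : k)}) :=
    fun g hg => by
      rw [Ideal.mem_colon_span_singleton, mul_comm, pow_succ']
      exact mul_mem_intClos_mul (monomial_edgeExponent_mem_edgeIdealH k hF.1) hg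
  refine le_antisymm (MonomialOrder.lex.le_of_leadingTerm_mem hle fun g hg hg0 => ?_) hle
  exact hF.leadingTerm_mem_intClos_pow _ t hg0 (mul_comm g _ ▸ Ideal.mem_colon_span_singleton.1 hg)

/-- **Lemma (good leaf colon, integral closures).** Let `I` be the edge ideal of a simple
hypergraph (no edge contains another) with a good leaf `F`, and let `f` be the monomial
associated with `F`. Then `\overline{I^(t+1)} : f = \overline{I^t}` for all `t ≥ 1`. -/
theorem intClos_pow_colon_good_leaf {k : Type*} [Field k] {n : ℕ}
    (E : Set (Finset (Fin n)))
    (hsimple : ∀ F₁ ∈ E, ∀ F₂ ∈ E, F₁ ⊆ F₂ → F₁ = F₂)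
    (F : Finset (Fin n)) (hF : IsGoodLeaf E F)
    (I : Ideal (MvPolynomial (Fin n) k)) (hI : I = edgeIdealH k E)
    (f : MvPolynomial (Fin n) k) (hf : f = ∏ i ∈ F, MvPolynomial.X i) :
    ∀ t : ℕ, 1 ≤ t → (intClos (I ^ (t + 1))).colon (Ideal.span {f}) = intClos (I ^ t) :=
  intClos_pow_colon_good_leaf_general E F hF I hI f hf
end

section
/- Let R be a Noetherian ring, let I ⊆ R be an ideal, and let f ∈ R be an element that is a non-zerodivisor on R/I^t for all t ≤ s. Then Ass R/(I,f)^t ⊆ Ass R/(I,f)^{t+1} for all t < s. -/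
/-!
Write `J = I + (f)`. Then `J^(t+1) = I^(t+1) + f J^t`, so if `f g ∈ J^(t+1)`, then
`f (g - h) ∈ I^(t+1)` for some `h ∈ J^t`. As `f` is a non-zerodivisor on `R/I^(t+1)`,
`g ∈ h + I^(t+1) ⊆ J^t`. Thus `J^t = J^(t+1) : f`, and multiplication by `f` embeds `R/J^t`
into `R/J^(t+1)`; associated primes of a submodule are associated primes of the module.
-/

namespace Ideal

variable {R : Type*} [CommRing R]

theorem sup_pow_succ_le (I K : Ideal R) (n : ℕ) :
    (I ⊔ K) ^ (n + 1) ≤ I ^ (n + 1) ⊔ K * (I ⊔ K) ^ n := by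
  induction n with
  | zero => simp
  | succ n ih =>
    calc (I ⊔ K) ^ (n + 2) = (I ⊔ K) ^ (n + 1) * (I ⊔ K) := pow_succ _ _
      _ ≤ (I ^ (n + 1) ⊔ K * (I ⊔ K) ^ n) * (I ⊔ K) := mul_mono_left ih
      _ = I ^ (n + 1) * I ⊔ (I ^ (n + 1) * K ⊔ K * ((I ⊔ K) ^ n * (I ⊔ K))) := by
        rw [sup_mul, mul_sup, mul_assoc, sup_assoc]
      _ ≤ I ^ (n + 2) ⊔ K * (I ⊔ K) ^ (n + 1) := by
        rw [← pow_succ, ← pow_succ]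
        refine sup_le_sup_left (sup_le ?_ le_rfl) _
        rw [mul_comm]
        exact mul_mono_right (pow_le_pow_left' le_sup_left _)

theorem mem_sup_span_pow_of_mul_mem {I : Ideal R} {f g : R} {t : ℕ}
    (hf : ∀ a, f * a ∈ I ^ (t + 1) → a ∈ I ^ (t + 1))
    (hg : f * g ∈ (I ⊔ span {f}) ^ (t + 1)) : g ∈ (I ⊔ span {f}) ^ t := by
  obtain ⟨a, ha, _, hfh, hsum⟩ := Submodule.mem_sup.mp (sup_pow_succ_le I (span {f}) t hg)
  obtain ⟨h, hh, rfl⟩ := mem_span_singleton_mul.mp hfh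
  have hgh : g - h ∈ I ^ (t + 1) := hf _ (by rwa [mul_sub, ← hsum, add_sub_cancel_right])
  have hIJ : I ^ (t + 1) ≤ (I ⊔ span {f}) ^ t :=
    (pow_le_pow_right t.le_succ).trans (pow_le_pow_left' le_sup_left t)
  simpa using add_mem (hIJ hgh) hh

theorem associatedPrimes_quotient_subset_of_mul_mem_iff {J K : Ideal R} {f : R}
    (h : ∀ g, f * g ∈ K ↔ g ∈ J) :
    associatedPrimes R (R ⧸ J) ⊆ associatedPrimes R (R ⧸ K) := by
  let φ : (R ⧸ J) →ₗ[R] (R ⧸ K) :=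
    J.mapQ K (LinearMap.mulLeft R f) fun g hg => (h g).mpr hg
  refine associatedPrimes.subset_of_injective (f := φ) ?_
  rw [← LinearMap.ker_eq_bot, eq_bot_iff]
  intro x hx
  obtain ⟨g, rfl⟩ := Quotient.mk_surjective x
  have hfg : f * g ∈ K := (Submodule.Quotient.mk_eq_zero K).mp hx
  exact (Submodule.Quotient.mk_eq_zero J).mpr ((h g).mp hfg)

end Ideal

theorem ass_powers_monotone_modulo_nonzerodivisor_general {R : Type*} [CommRing R]
    (I : Ideal R) (f : R) (s : ℕ)
    (hnzd : ∀ t : ℕ, t ≤ s → ∀ g : R, f * g ∈ I ^ t → g ∈ I ^ t) :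
    ∀ t : ℕ, t < s →
      associatedPrimes R (R ⧸ (I + Ideal.span {f}) ^ t) ⊆
        associatedPrimes R (R ⧸ (I + Ideal.span {f}) ^ (t + 1)) := by
  intro t ht
  refine Ideal.associatedPrimes_quotient_subset_of_mul_mem_iff (f := f)
    fun g => ⟨?_, fun hg => ?_⟩
  · exact Ideal.mem_sup_span_pow_of_mul_mem (hnzd (t + 1) ht)
  · rw [pow_succ']
    exact Ideal.mul_mem_mul (Ideal.mem_sup_right (Ideal.mem_span_singleton_self f)) hg

/-- **Corollary (associated primes of powers modulo a non-zerodivisor).** Let `R` be a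
Noetherian ring, `I ⊆ R` an ideal and `f ∈ R` an element which is a non-zerodivisor on
`R/I^t` for all `t ≤ s`. Then `Ass R/(I,f)^t ⊆ Ass R/(I,f)^(t+1)` for all `t < s`. -/
theorem ass_powers_monotone_modulo_nonzerodivisor {R : Type*} [CommRing R]
    [IsNoetherianRing R] (I : Ideal R) (f : R) (s : ℕ)
    (hnzd : ∀ t : ℕ, t ≤ s → ∀ g : R, f * g ∈ I ^ t → g ∈ I ^ t) :
    ∀ t : ℕ, t < s →
      associatedPrimes R (R ⧸ (I + Ideal.span {f}) ^ t) ⊆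
        associatedPrimes R (R ⧸ (I + Ideal.span {f}) ^ (t + 1)) :=
  ass_powers_monotone_modulo_nonzerodivisor_general I f s hnzd
end
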